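/- arXiv:1606.08500 — 5 statements merged into one kernel-verified Lean document; each statement's English description precedes it below -/
import Mathlib

section
/- Let k ≥ 1 be an integer and set p = 1 + 1/k. Let R_k denote the largest real root of the probabilists' Hermite polynomial H_k, and let F : [0,∞) → ℝ be a continuous function with F(0) = 1 such that F(k·H_{k-1}(q)/H_k(q)) = H_{k+1}(q)/(H_k(q))^{(k+1)/k} for every real q > R_k. Then for every t ≥ 0 one has 1 − (p(p−1)/2)·t² ≤ F(t). -/
open Real

noncomputable section

open Polynomial

/-- The probabilists' Hermite polynomial of degree `k`, as a real function. -/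
def hermiteFun (k : ℕ) (x : ℝ) : ℝ := Polynomial.aeval x (Polynomial.hermite k)

noncomputable section

lemma derivative_hermite (n : ℕ) :
    derivative (hermite (n+1)) = (n+1 : ℤ) • hermite n := by
  induction n using Nat.strong_induction_on with
  | _ n ih =>
    match n with
    | 0 => simp [hermite_one, hermite_zero]
    | 1 => simp [hermite_succ, hermite_one, hermite_zero]; ring
    | (m+2) =>
      rw [hermite_succ (m+2)]
      rw [derivative_sub, derivative_mul, derivative_X, one_mul]
      rw [ih (m+1) (by omega), derivative_smul, ih m (by omega)]
      rw [hermite_succ (m+1), ih m (by omega)]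
      simp only [zsmul_eq_mul]
      push_cast
      ring

lemma H_eq_eval (k : ℕ) (x : ℝ) :
    hermiteFun k x = Polynomial.eval x ((hermite k).map (Int.castRingHom ℝ)) := by
  rw [hermiteFun, aeval_def, eval_map]; rfl

lemma H_zero (x : ℝ) : hermiteFun 0 x = 1 := by simp [hermiteFun, hermite_zero]
lemma H_one (x : ℝ) : hermiteFun 1 x = x := by simp [hermiteFun, hermite_one]

lemma H_rec (n : ℕ) (x : ℝ) :
    hermiteFun (n+2) x = x * hermiteFun (n+1) x - (n+1 : ℝ) * hermiteFun n x := by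
  rw [hermiteFun, hermite_succ, derivative_hermite]
  simp [hermiteFun, mul_comm]

lemma H_hasDerivAt (n : ℕ) (x : ℝ) :
    HasDerivAt (hermiteFun (n+1)) ((n+1 : ℝ) * hermiteFun n x) x := by
  have h := Polynomial.hasDerivAt ((hermite (n+1)).map (Int.castRingHom ℝ)) x
  have h2 : Polynomial.eval x (derivative ((hermite (n+1)).map (Int.castRingHom ℝ)))
      = (n+1 : ℝ) * hermiteFun n x := by
    rw [derivative_map, derivative_hermite]
    simp [H_eq_eval]
  rw [h2] at h
  have h3 : hermiteFun (n+1) = fun y => Polynomial.eval y ((hermite (n+1)).map (Int.castRingHom ℝ)) := by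
    funext y; exact H_eq_eval _ y
  rw [h3]
  exact h

lemma turan (n : ℕ) (x : ℝ) :
    0 < hermiteFun (n+1) x ^ 2 - hermiteFun (n+2) x * hermiteFun n x := by
  induction n with
  | zero => simp [H_one, H_rec, H_zero]; nlinarith [sq_nonneg x]
  | succ m ih =>
    have r1 := H_rec (m+1) x
    simp only [show m+1+2 = m+3 from by omega, show m+1+1 = m+2 from by omega] at r1
    push_cast at r1
    have r2 := H_rec m x
    have key : hermiteFun (m+2) x ^2 - hermiteFun (m+3) x * hermiteFun (m+1) x
        = (m+1 : ℝ) * (hermiteFun (m+1) x ^2 - hermiteFun (m+2) x * hermiteFun m x) + hermiteFun (m+1) x ^ 2 := by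
      rw [r1, r2]; ring
    rw [key]
    have : (0:ℝ) < (m+1:ℝ) := by positivity
    nlinarith [sq_nonneg (hermiteFun (m+1) x)]

lemma H_continuous (n : ℕ) : Continuous (hermiteFun n) := by
  have : hermiteFun n = fun x => Polynomial.eval x ((hermite n).map (Int.castRingHom ℝ)) := by
    funext y; exact H_eq_eval _ y
  rw [this]
  exact Polynomial.continuous _

lemma Hmap_monic (n : ℕ) : ((hermite n).map (Int.castRingHom ℝ)).Monic :=
  (hermite_monic n).map _

lemma Hmap_degree (n : ℕ) : ((hermite n).map (Int.castRingHom ℝ)).degree = n := by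
  rw [degree_map_eq_of_injective (f := Int.castRingHom ℝ) (fun a b h => by simpa using h)]
  exact degree_hermite n

lemma H_tendsto_atTop (n : ℕ) (hn : 1 ≤ n) : Filter.Tendsto (hermiteFun n) Filter.atTop Filter.atTop := by
  have : hermiteFun n = fun x => Polynomial.eval x ((hermite n).map (Int.castRingHom ℝ)) := by
    funext y; exact H_eq_eval _ y
  rw [this]
  apply Polynomial.tendsto_atTop_of_leadingCoeff_nonneg
  · rw [Hmap_degree]; exact_mod_cast Nat.pos_of_ne_zero (by omega)
  · rw [(Hmap_monic n).leadingCoeff]; norm_num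

lemma H_exists_pos_beyond (n : ℕ) (hn : 1 ≤ n) (a : ℝ) : ∃ b, a < b ∧ 0 < hermiteFun n b := by
  have h := (H_tendsto_atTop n hn).eventually_gt_atTop 0
  rcases ((h.and (Filter.eventually_gt_atTop a)).exists) with ⟨b, hb1, hb2⟩
  exact ⟨b, hb2, hb1⟩

lemma chain (j : ℕ) : ∃ M : ℝ, hermiteFun (j+1) M = 0 ∧ (∀ i ≤ j, 0 < hermiteFun i M) ∧
    (∀ x, M < x → ∀ i ≤ j+1, 0 < hermiteFun i x) := by
  induction j with
  | zero =>
    refine ⟨0, by simp [H_one], ?_, ?_⟩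
    · intro i hi; interval_cases i; simp [H_zero]
    · intro x hx i hi; interval_cases i
      · simp [H_zero]
      · simpa [H_one] using hx
  | succ j ih =>
    obtain ⟨M, hroot, hAtM, hBeyond⟩ := ih
    have hPM : hermiteFun (j+2) M < 0 := by
      have := H_rec j M
      rw [hroot] at this
      have hj : 0 < hermiteFun j M := hAtM j le_rfl
      rw [this]; nlinarith
    have hfin : {x : ℝ | hermiteFun (j+2) x = 0 ∧ M ≤ x}.Finite := by
      apply Set.Finite.subset (Polynomial.finite_setOf_isRoot
        (p := (hermite (j+2)).map (Int.castRingHom ℝ)) ?_)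
      · intro x hx
        simp only [Set.mem_setOf_eq, IsRoot]
        rw [← H_eq_eval]; exact hx.1
      · exact (Hmap_monic (j+2)).ne_zero
    have hne : {x : ℝ | hermiteFun (j+2) x = 0 ∧ M ≤ x}.Nonempty := by
      obtain ⟨b, hb1, hb2⟩ := H_exists_pos_beyond (j+2) (by omega) M
      have := intermediate_value_Icc hb1.le (H_continuous (j+2)).continuousOn
        (a := M) (b := b)
      have h0 : (0:ℝ) ∈ Set.Icc (hermiteFun (j+2) M) (hermiteFun (j+2) b) := ⟨hPM.le, hb2.le⟩
      obtain ⟨c, hc1, hc2⟩ := this h0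
      exact ⟨c, hc2, hc1.1⟩
    obtain ⟨M', hM'mem, hM'max⟩ := Set.Finite.exists_maximalFor id _ hfin hne
    have hMM' : M < M' := by
      rcases lt_or_eq_of_le hM'mem.2 with h | h
      · exact h
      · exact absurd hM'mem.1 (by rw [← h]; exact hPM.ne)
    have hub : ∀ y, hermiteFun (j+2) y = 0 → M ≤ y → y ≤ M' := by
      intro y hy1 hy2
      by_contra hlt
      push_neg at hlt
      exact absurd (hM'max (j := y) ⟨hy1, hy2⟩ hlt.le) (not_le.mpr hlt)
    refine ⟨M', hM'mem.1, fun i hi => hBeyond M' hMM' i hi, ?_⟩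
    intro x hx i hi
    rcases Nat.lt_or_ge i (j+2) with hcase | hcase
    · exact hBeyond x (hMM'.trans hx) i (by omega)
    · have hi2 : i = j+2 := by omega
      subst hi2
      rcases lt_trichotomy (hermiteFun (j+2) x) 0 with hneg | hzero | hpos
      · exfalso
        obtain ⟨b, hb1, hb2⟩ := H_exists_pos_beyond (j+2) (by omega) x
        obtain ⟨c, hc1, hc2⟩ := intermediate_value_Icc hb1.le
          (H_continuous (j+2)).continuousOn (a := x) (b := b) ⟨hneg.le, hb2.le⟩
        have := hub c hc2 ((hMM'.trans hx).le.trans hc1.1)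
        have : x ≤ M' := le_trans hc1.1 this |> fun _ => by linarith [hc1.1, this]
        linarith
      · exfalso
        have := hub x hzero (hMM'.trans hx).le
        linarith
      · exact hpos

lemma R_props (k : ℕ) (hk : 1 ≤ k) (R : ℝ) (hR : IsGreatest {x : ℝ | hermiteFun k x = 0} R) :
    (∀ x, R < x → ∀ i ≤ k, 0 < hermiteFun i x) ∧ (∀ i ≤ k-1, 0 < hermiteFun i R) := by
  obtain ⟨j, rfl⟩ : ∃ j, k = j + 1 := ⟨k-1, by omega⟩
  obtain ⟨M, hroot, hAtM, hBeyond⟩ := chain j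
  have hMR : M = R := by
    have h1 : M ≤ R := hR.2 hroot
    rcases lt_or_eq_of_le h1 with h | h
    · exact absurd hR.1 (hBeyond R h (j+1) le_rfl).ne'
    · exact h
  subst hMR
  exact ⟨hBeyond, fun i hi => hAtM i (by omega)⟩

lemma ratio_le (k : ℕ) (q : ℝ) (hpos : ∀ i ≤ k, 0 < hermiteFun i q) :
    ∀ m, m + 1 ≤ k → hermiteFun k q * hermiteFun (k-m-1) q ≤ hermiteFun (k-m) q * hermiteFun (k-1) q := by
  intro m
  induction m with
  | zero => intro _; simp
  | succ m ih =>
    intro hm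
    have IH := ih (by omega)
    have e0 : k - m = k - (m+1) + 1 := by omega
    have tur := turan (k-m-2) q
    have e1 : k-m-2+1 = k-m-1 := by omega
    have e2 : k-m-2+2 = k-m := by omega
    rw [e1, e2] at tur
    -- goal: hermiteFun k q * hermiteFun (k-(m+1)-1) q ≤ hermiteFun (k-(m+1)) q * hermiteFun (k-1) q
    have e3 : k - (m+1) - 1 = k - m - 2 := by omega
    have e4 : k - (m+1) = k - m - 1 := by omega
    rw [e3, e4]
    have h1 : 0 < hermiteFun (k-m-1) q := hpos _ (by omega)
    have h2 : 0 ≤ hermiteFun (k-m-2) q := (hpos _ (by omega)).le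
    have h3 : 0 < hermiteFun (k-1) q := hpos _ (by omega)
    have step1 : hermiteFun k q * hermiteFun (k-m-2) q * hermiteFun (k-m-1) q
        ≤ hermiteFun (k-m-1) q ^ 2 * hermiteFun (k-1) q := by
      calc hermiteFun k q * hermiteFun (k-m-2) q * hermiteFun (k-m-1) q
          = (hermiteFun k q * hermiteFun (k-m-1) q) * hermiteFun (k-m-2) q := by ring
        _ ≤ (hermiteFun (k-m) q * hermiteFun (k-1) q) * hermiteFun (k-m-2) q := by
            apply mul_le_mul_of_nonneg_right _ h2
            rw [show k - m - 1 = k - (m+0) - 1 by omega] at *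
            simpa using IH
        _ = (hermiteFun (k-m) q * hermiteFun (k-m-2) q) * hermiteFun (k-1) q := by ring
        _ ≤ hermiteFun (k-m-1) q ^ 2 * hermiteFun (k-1) q := by
            apply mul_le_mul_of_nonneg_right _ h3.le
            nlinarith [tur]
    nlinarith [step1, h1]

lemma pow_chain (k : ℕ) (q : ℝ) (hpos : ∀ i ≤ k, 0 < hermiteFun i q) :
    ∀ j, j ≤ k - 1 → hermiteFun k q ^ j * hermiteFun (k-1-j) q ≤ hermiteFun (k-1) q ^ (j+1) := by
  intro j
  induction j with
  | zero => intro _; simp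
  | succ j ih =>
    intro hj
    have IH := ih (by omega)
    have hV := ratio_le k q hpos (j+1) (by omega)
    have e1 : k - (j+1) - 1 = k - 1 - (j+1) := by omega
    have e2 : k - (j+1) = k - 1 - j := by omega
    rw [e1, e2] at hV
    have hk0 : 0 < hermiteFun k q := hpos _ le_rfl
    have h1 : 0 < hermiteFun (k-1) q := hpos _ (by omega)
    calc hermiteFun k q ^ (j+1) * hermiteFun (k-1-(j+1)) q
        = hermiteFun k q ^ j * (hermiteFun k q * hermiteFun (k-1-(j+1)) q) := by ring
      _ ≤ hermiteFun k q ^ j * (hermiteFun (k-1-j) q * hermiteFun (k-1) q) := by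
          apply mul_le_mul_of_nonneg_left hV (by positivity)
      _ = (hermiteFun k q ^ j * hermiteFun (k-1-j) q) * hermiteFun (k-1) q := by ring
      _ ≤ hermiteFun (k-1) q ^ (j+1) * hermiteFun (k-1) q := mul_le_mul_of_nonneg_right IH h1.le
      _ = hermiteFun (k-1) q ^ (j+2) := by ring

lemma key_pow_ineq (k : ℕ) (hk : 1 ≤ k) (q : ℝ) (hpos : ∀ i ≤ k, 0 < hermiteFun i q) :
    hermiteFun k q ^ (k-1) ≤ hermiteFun (k-1) q ^ k := by
  have := pow_chain k q hpos (k-1) le_rfl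
  rw [show k-1-(k-1) = 0 by omega, H_zero, mul_one, show k-1+1 = k by omega] at this
  exact this

lemma H_hasDerivAt' (n : ℕ) (hn : 1 ≤ n) (x : ℝ) :
    HasDerivAt (hermiteFun n) ((n:ℝ) * hermiteFun (n-1) x) x := by
  obtain ⟨m, rfl⟩ : ∃ m, n = m + 1 := ⟨n-1, by omega⟩
  simpa using H_hasDerivAt m x

lemma H_deriv_low (k : ℕ) (hk : 1 ≤ k) (q : ℝ) :
    HasDerivAt (hermiteFun (k-1)) (q * hermiteFun (k-1) q - hermiteFun k q) q := by
  rcases Nat.lt_or_ge k 2 with h | h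
  · have hk1 : k = 1 := by omega
    subst hk1
    have heq : hermiteFun 0 = fun _ => (1:ℝ) := by
      funext y; exact H_zero y
    simp only [show (1:ℕ)-1 = 0 from rfl]
    have hval : q * hermiteFun 0 q - hermiteFun 1 q = 0 := by
      have h2 : hermiteFun 1 q = q := H_one q
      rw [H_zero, h2]; ring
    rw [hval, heq]
    exact hasDerivAt_const q 1
  · obtain ⟨m, rfl⟩ : ∃ m, k = m + 2 := ⟨k-2, by omega⟩
    have hd := H_hasDerivAt' (m+1) (by omega) q
    have hrec := H_rec m q
    have : q * hermiteFun (m+2-1) q - hermiteFun (m+2) q = ((m+1:ℕ):ℝ) * hermiteFun (m+1-1) q := by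
      simp only [show m+2-1 = m+1 from rfl, show m+1-1 = m from rfl]
      rw [hrec]; push_cast; ring
    rw [this]
    exact hd

lemma H_rec_top (k : ℕ) (hk : 1 ≤ k) (q : ℝ) :
    hermiteFun (k+1) q = q * hermiteFun k q - (k:ℝ) * hermiteFun (k-1) q := by
  obtain ⟨m, rfl⟩ : ∃ m, k = m + 1 := ⟨k-1, by omega⟩
  have := H_rec m q
  simpa using this

lemma turan_k (k : ℕ) (hk : 1 ≤ k) (q : ℝ) :
    0 < hermiteFun k q ^ 2 - hermiteFun (k+1) q * hermiteFun (k-1) q := by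
  obtain ⟨m, rfl⟩ : ∃ m, k = m + 1 := ⟨k-1, by omega⟩
  simpa using turan m q

lemma psi_deriv (k : ℕ) (hk : 1 ≤ k) (q : ℝ)
    (hA : 0 < hermiteFun k q) (hB : 0 < hermiteFun (k-1) q)
    (hAB : hermiteFun k q ≤ hermiteFun (k-1) q * hermiteFun k q ^ ((1:ℝ)/(k:ℝ))) :
    ∃ D ≤ 0, HasDerivAt (fun y => hermiteFun (k+1) y / hermiteFun k y ^ (((k:ℝ)+1)/(k:ℝ))
      - 1 + ((k:ℝ)+1)/(2*(k:ℝ)^2) * ((k:ℝ) * hermiteFun (k-1) y / hermiteFun k y)^2) D q := by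
  set A := hermiteFun k q with hA_def
  set B := hermiteFun (k-1) q with hB_def
  set C := hermiteFun (k+1) q with hC_def
  have hk0 : (k:ℝ) ≠ 0 := by positivity
  have hk1 : (1:ℝ) ≤ (k:ℝ) := by exact_mod_cast hk
  set e : ℝ := ((k:ℝ)+1)/(k:ℝ) with he_def
  set u : ℝ := A ^ ((1:ℝ)/(k:ℝ)) with hu_def
  have hu : 0 < u := rpow_pos_of_pos hA _
  have hAe : A ^ e = A * u := by
    rw [he_def, show ((k:ℝ)+1)/(k:ℝ) = 1 + 1/(k:ℝ) by field_simp]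
    rw [rpow_add hA, rpow_one]
  have hAe1 : A ^ (e-1) = u := by
    rw [he_def, show ((k:ℝ)+1)/(k:ℝ) - 1 = 1/(k:ℝ) by field_simp; ring]
  -- derivatives
  have dA : HasDerivAt (hermiteFun k) ((k:ℝ) * B) q := H_hasDerivAt' k hk q
  have dB : HasDerivAt (hermiteFun (k-1)) (q * B - A) q := H_deriv_low k hk q
  have dC : HasDerivAt (hermiteFun (k+1)) (((k:ℝ)+1) * A) q := by
    have := H_hasDerivAt' (k+1) (by omega) q
    simpa using this
  have dG : HasDerivAt (fun y => hermiteFun k y ^ e) (e * A ^ (e-1) * ((k:ℝ) * B)) q := by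
    have houter := Real.hasDerivAt_rpow_const (x := A) (p := e) (Or.inl hA.ne')
    exact houter.comp q dA
  have hGne : A ^ e ≠ 0 := (rpow_pos_of_pos hA e).ne'
  have dPhi : HasDerivAt (fun y => hermiteFun (k+1) y / hermiteFun k y ^ e)
      ((((k:ℝ)+1)*A * A^e - C * (e * A ^ (e-1) * ((k:ℝ) * B))) / (A^e)^2) q :=
    dC.div dG hGne
  have dt : HasDerivAt (fun y => (k:ℝ) * hermiteFun (k-1) y / hermiteFun k y)
      (((k:ℝ) * (q * B - A) * A - (k:ℝ) * B * ((k:ℝ) * B)) / A^2) q := by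
    have := (dB.const_mul (k:ℝ)).div dA hA.ne'
    exact this
  have dpsi := ((dPhi.sub_const 1).add
    (((dt.pow 2)).const_mul (((k:ℝ)+1)/(2*(k:ℝ)^2))))
  refine ⟨_, ?_, dpsi⟩
  -- show derivative ≤ 0
  have hCval : C = q * A - (k:ℝ) * B := H_rec_top k hk q
  have hDelta : 0 < A^2 - C * B := turan_k k hk q
  have huk : u ^ (k:ℕ) = A := by
    rw [hu_def, ← rpow_natCast (A ^ ((1:ℝ)/(k:ℝ))) k, ← rpow_mul hA.le]
    rw [one_div, inv_mul_cancel₀ hk0, rpow_one]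
  have key : ∀ x : ℝ, x = (((k:ℝ)+1) * (A^2 - C*B) * (A - B*u)) / (A^3 * u) → x ≤ 0 → True := fun _ _ _ => trivial
  have hfinal : (((k:ℝ)+1)*A * A^e - C * (e * A ^ (e-1) * ((k:ℝ) * B))) / (A^e)^2
      + (((k:ℝ)+1)/(2*(k:ℝ)^2)) * (2 * ((k:ℝ) * B / A) ^ (2-1) *
        (((k:ℝ) * (q * B - A) * A - (k:ℝ) * B * ((k:ℝ) * B)) / A^2))
      = (((k:ℝ)+1) * (A^2 - C*B) * (A - B*u)) / (A^3 * u) := by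
    rw [hAe, hAe1, hCval, he_def]
    field_simp [hA.ne']
    linear_combination (-(k:ℝ)^2*B^3*u + A*(k:ℝ)*B^2*q*u - A^2*(k:ℝ)*B*u) * mul_inv_cancel₀ hA.ne'
  have hsign : (((k:ℝ)+1) * (A^2 - C*B) * (A - B*u)) / (A^3 * u) ≤ 0 := by
    apply div_nonpos_of_nonpos_of_nonneg
    · have h1 : A - B * u ≤ 0 := by linarith [hAB]
      exact mul_nonpos_of_nonneg_of_nonpos
        (mul_nonneg (by positivity) hDelta.le) h1
    · positivity
  have goal_eq : ((((k:ℝ)+1)*A * A^e - C * (e * A ^ (e-1) * ((k:ℝ) * B))) / (A^e)^2)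
      + (((k:ℝ)+1)/(2*(k:ℝ)^2)) * (2 * ((k:ℝ) * B / A) ^ (2-1) *
        (((k:ℝ) * (q * B - A) * A - (k:ℝ) * B * ((k:ℝ) * B)) / A^2)) ≤ 0 := by
    rw [hfinal]; exact hsign
  convert goal_eq using 2 <;> norm_num [hA_def, hB_def]

lemma rpow_key (k : ℕ) (hk : 1 ≤ k) (q : ℝ) (hpos : ∀ i ≤ k, 0 < hermiteFun i q) :
    hermiteFun k q ≤ hermiteFun (k-1) q * hermiteFun k q ^ ((1:ℝ)/(k:ℝ)) := by
  set A := hermiteFun k q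
  set B := hermiteFun (k-1) q
  have hA : 0 < A := hpos k le_rfl
  have hB : 0 < B := hpos (k-1) (by omega)
  have hk0 : (k:ℝ) ≠ 0 := by positivity
  set u : ℝ := A ^ ((1:ℝ)/(k:ℝ)) with hu_def
  have hu : 0 < u := rpow_pos_of_pos hA _
  have huk : u ^ (k:ℕ) = A := by
    rw [hu_def, ← rpow_natCast (A ^ ((1:ℝ)/(k:ℝ))) k, ← rpow_mul hA.le]
    rw [one_div, inv_mul_cancel₀ hk0, rpow_one]
  have hpow : A ^ k ≤ (B * u) ^ k := by
    have h1 : A ^ (k-1) ≤ B ^ k := key_pow_ineq k hk q hpos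
    have h2 : A ^ k = A ^ (k-1) * A := by
      rw [← pow_succ, show k-1+1 = k by omega]
    rw [h2, mul_pow]
    calc A ^ (k-1) * A ≤ B ^ k * A := mul_le_mul_of_nonneg_right h1 hA.le
      _ = B ^ k * u ^ k := by rw [huk]
  exact le_of_pow_le_pow_left₀ (by omega) (by positivity) hpow

lemma t_tendsto_zero (k : ℕ) (hk : 1 ≤ k) :
    Filter.Tendsto (fun q => (k:ℝ) * hermiteFun (k-1) q / hermiteFun k q)
      Filter.atTop (nhds 0) := by
  have hdeg : ((hermite (k-1)).map (Int.castRingHom ℝ)).degree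
      < ((hermite k).map (Int.castRingHom ℝ)).degree := by
    rw [Hmap_degree, Hmap_degree]
    exact_mod_cast (by omega : k - 1 < k)
  have h := Polynomial.div_tendsto_zero_of_degree_lt _ _ hdeg
  have h2 : Filter.Tendsto (fun q => (k:ℝ) * (hermiteFun (k-1) q / hermiteFun k q))
      Filter.atTop (nhds ((k:ℝ) * 0)) := by
    apply Filter.Tendsto.const_mul
    have : (fun q => hermiteFun (k-1) q / hermiteFun k q)
        = fun x => eval x ((hermite (k-1)).map (Int.castRingHom ℝ))
          / eval x ((hermite k).map (Int.castRingHom ℝ)) := by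
      funext y; rw [H_eq_eval, H_eq_eval]
    rw [this]; exact h
  simpa [mul_div_assoc] using h2

lemma Phi_tendsto_one (k : ℕ) (hk : 1 ≤ k) :
    Filter.Tendsto (fun q => hermiteFun (k+1) q / hermiteFun k q ^ (((k:ℝ)+1)/(k:ℝ)))
      Filter.atTop (nhds 1) := by
  set e : ℝ := ((k:ℝ)+1)/(k:ℝ) with he_def
  have hk0 : (k:ℝ) ≠ 0 := by positivity
  have h1 : Filter.Tendsto (fun q => hermiteFun (k+1) q / q ^ (k+1))
      Filter.atTop (nhds 1) := by
    have hdeg : ((hermite (k+1)).map (Int.castRingHom ℝ)).degree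
        = (X ^ (k+1) : ℝ[X]).degree := by
      rw [Hmap_degree, degree_X_pow]
    have h := Polynomial.div_tendsto_leadingCoeff_div_of_degree_eq _ _ hdeg
    have heq : (fun q : ℝ => hermiteFun (k+1) q / q ^ (k+1))
        = fun x => eval x ((hermite (k+1)).map (Int.castRingHom ℝ)) / eval x (X ^ (k+1) : ℝ[X]) := by
      funext y; rw [H_eq_eval]; simp
    rw [heq]
    convert h using 2
    rw [(Hmap_monic (k+1)).leadingCoeff, (monic_X_pow _).leadingCoeff]
    norm_num
  have h2 : Filter.Tendsto (fun q => hermiteFun k q / q ^ k)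
      Filter.atTop (nhds 1) := by
    have hdeg : ((hermite k).map (Int.castRingHom ℝ)).degree
        = (X ^ k : ℝ[X]).degree := by
      rw [Hmap_degree, degree_X_pow]
    have h := Polynomial.div_tendsto_leadingCoeff_div_of_degree_eq _ _ hdeg
    have heq : (fun q : ℝ => hermiteFun k q / q ^ k)
        = fun x => eval x ((hermite k).map (Int.castRingHom ℝ)) / eval x (X ^ k : ℝ[X]) := by
      funext y; rw [H_eq_eval]; simp
    rw [heq]
    convert h using 2
    rw [(Hmap_monic k).leadingCoeff, (monic_X_pow _).leadingCoeff]
    norm_num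
  have h3 : Filter.Tendsto (fun q => (hermiteFun k q / q ^ k) ^ (-e))
      Filter.atTop (nhds 1) := by
    have := h2.rpow_const (p := -e) (Or.inl one_ne_zero)
    simpa using this
  have h4 := h1.mul h3
  rw [mul_one] at h4
  apply h4.congr'
  -- eventually equal for large q
  filter_upwards [Filter.eventually_gt_atTop (0:ℝ),
    (H_tendsto_atTop k hk).eventually_gt_atTop 0] with q hq hA
  have hqk : (0:ℝ) ≤ q ^ k := by positivity
  have step1 : (hermiteFun k q / q ^ k) ^ (-e)
      = (hermiteFun k q ^ e)⁻¹ * q ^ ((k:ℝ)+1) := by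
    rw [div_rpow hA.le hqk, ← rpow_natCast q k, ← rpow_mul hq.le]
    have he2 : (k:ℝ) * -e = -((k:ℝ)+1) := by rw [he_def]; field_simp
    rw [he2, rpow_neg hA.le, rpow_neg hq.le]
    rw [div_inv_eq_mul]
  rw [step1]
  have hq1 : q ^ (k+1) = q ^ ((k:ℝ)+1) := by
    rw [← rpow_natCast q (k+1)]; push_cast; ring_nf
  rw [hq1]
  have hne1 : q ^ ((k:ℝ)+1) ≠ 0 := (rpow_pos_of_pos hq _).ne'
  have hne2 : hermiteFun k q ^ e ≠ 0 := (rpow_pos_of_pos hA _).ne'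
  field_simp

lemma psi_nonneg (k : ℕ) (hk : 1 ≤ k) (R : ℝ)
    (hR : IsGreatest {x : ℝ | hermiteFun k x = 0} R) :
    ∀ q, R < q → 0 ≤ hermiteFun (k+1) q / hermiteFun k q ^ (((k:ℝ)+1)/(k:ℝ))
      - 1 + ((k:ℝ)+1)/(2*(k:ℝ)^2) * ((k:ℝ) * hermiteFun (k-1) q / hermiteFun k q)^2 := by
  have hpos := (R_props k hk R hR).1
  set ψ : ℝ → ℝ := fun y => hermiteFun (k+1) y / hermiteFun k y ^ (((k:ℝ)+1)/(k:ℝ))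
      - 1 + ((k:ℝ)+1)/(2*(k:ℝ)^2) * ((k:ℝ) * hermiteFun (k-1) y / hermiteFun k y)^2 with hψ
  have hder : ∀ q ∈ Set.Ioi R, ∃ D ≤ 0, HasDerivAt ψ D q := by
    intro q hq
    exact psi_deriv k hk q (hpos q hq k le_rfl) (hpos q hq (k-1) (by omega))
      (rpow_key k hk q (hpos q hq))
  have hanti : AntitoneOn ψ (Set.Ioi R) := by
    apply antitoneOn_of_deriv_nonpos (convex_Ioi R)
    · intro q hq
      obtain ⟨D, _, hD⟩ := hder q hq
      exact hD.continuousAt.continuousWithinAt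
    · intro q hq
      rw [interior_Ioi] at hq
      obtain ⟨D, _, hD⟩ := hder q hq
      exact hD.differentiableAt.differentiableWithinAt
    · intro q hq
      rw [interior_Ioi] at hq
      obtain ⟨D, hD0, hD⟩ := hder q hq
      rw [hD.deriv]
      exact hD0
  have hlim : Filter.Tendsto ψ Filter.atTop (nhds 0) := by
    have h1 := Phi_tendsto_one k hk
    have h2 := t_tendsto_zero k hk
    have h3 : Filter.Tendsto (fun q => ((k:ℝ)+1)/(2*(k:ℝ)^2)
        * ((k:ℝ) * hermiteFun (k-1) q / hermiteFun k q)^2) Filter.atTop (nhds 0) := by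
      have := (h2.pow 2).const_mul (((k:ℝ)+1)/(2*(k:ℝ)^2))
      simpa using this
    have := (h1.sub_const 1).add h3
    simpa using this
  intro q hq
  apply le_of_tendsto hlim
  filter_upwards [Filter.eventually_ge_atTop q] with y hy
  exact hanti hq (lt_of_lt_of_le hq hy) hy

lemma t_surj (k : ℕ) (hk : 1 ≤ k) (R : ℝ)
    (hR : IsGreatest {x : ℝ | hermiteFun k x = 0} R) (t₀ : ℝ) (ht₀ : 0 < t₀) :
    ∃ q, R < q ∧ (k:ℝ) * hermiteFun (k-1) q / hermiteFun k q = t₀ := by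
  obtain ⟨hpos, hposR⟩ := R_props k hk R hR
  set t : ℝ → ℝ := fun q => (k:ℝ) * hermiteFun (k-1) q / hermiteFun k q with ht_def
  have hBR : 0 < hermiteFun (k-1) R := hposR (k-1) le_rfl
  -- t tends to atTop as q → R from the right
  have hA0 : Filter.Tendsto (hermiteFun k) (nhdsWithin R (Set.Ioi R)) (nhdsWithin 0 (Set.Ioi 0)) := by
    rw [tendsto_nhdsWithin_iff]
    constructor
    · have h0 : Filter.Tendsto (hermiteFun k) (nhdsWithin R (Set.Ioi R)) (nhds (hermiteFun k R)) :=
        ((H_continuous k).tendsto R).mono_left nhdsWithin_le_nhds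
      rwa [hR.1] at h0
    · filter_upwards [self_mem_nhdsWithin] with y hy
      exact hpos y hy k le_rfl
  have htop : Filter.Tendsto t (nhdsWithin R (Set.Ioi R)) Filter.atTop := by
    have hinv : Filter.Tendsto (fun q => (hermiteFun k q)⁻¹)
        (nhdsWithin R (Set.Ioi R)) Filter.atTop := hA0.inv_tendsto_nhdsGT_zero
    have hnum : Filter.Tendsto (fun q => (k:ℝ) * hermiteFun (k-1) q)
        (nhdsWithin R (Set.Ioi R)) (nhds ((k:ℝ) * hermiteFun (k-1) R)) := by
      exact Filter.Tendsto.mono_left (((H_continuous (k-1)).tendsto R).const_mul _) nhdsWithin_le_nhds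
    have hc : 0 < (k:ℝ) * hermiteFun (k-1) R := by positivity
    have := Filter.Tendsto.pos_mul_atTop hc hnum hinv
    apply this.congr
    intro y; simp only [ht_def, div_eq_mul_inv]
  -- pick q1 with t q1 > t₀
  have h1 : ∃ q1, R < q1 ∧ t₀ < t q1 := by
    have hev := htop.eventually_gt_atTop t₀
    obtain ⟨q1, hq1, hq1'⟩ := (hev.and self_mem_nhdsWithin).exists
    exact ⟨q1, hq1', hq1⟩
  obtain ⟨q1, hq1R, hq1t⟩ := h1
  -- pick q2 > q1 with t q2 < t₀
  have h2 : ∃ q2, q1 < q2 ∧ t q2 < t₀ := by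
    have hev := ((t_tendsto_zero k hk).eventually (eventually_lt_nhds ht₀)).and
      (Filter.eventually_gt_atTop q1)
    obtain ⟨q2, h2a, h2b⟩ := hev.exists
    exact ⟨q2, h2b, h2a⟩
  obtain ⟨q2, hq12, hq2t⟩ := h2
  -- IVT
  have hcont : ContinuousOn t (Set.Icc q1 q2) := by
    apply ContinuousOn.div
    · exact (continuous_const.mul (H_continuous (k-1))).continuousOn
    · exact (H_continuous k).continuousOn
    · intro x hx
      exact (hpos x (lt_of_lt_of_le hq1R hx.1) k le_rfl).ne'
  have := intermediate_value_Icc' hq12.le hcont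
  have hmem : t₀ ∈ Set.Icc (t q2) (t q1) := ⟨hq2t.le, hq1t.le⟩
  obtain ⟨q, hq, hq'⟩ := this hmem
  exact ⟨q, lt_of_lt_of_le hq1R hq.1, hq'⟩

theorem F_lower_bound_beckner (k : ℕ) (hk : 1 ≤ k) (p : ℝ) (hp : p = 1 + 1 / (k : ℝ))
    (R : ℝ) (hR : IsGreatest {x : ℝ | hermiteFun k x = 0} R)
    (F : ℝ → ℝ) (hFcont : ContinuousOn F (Set.Ici 0)) (hF0 : F 0 = 1)
    (hF : ∀ q : ℝ, R < q →
      F ((k : ℝ) * hermiteFun (k - 1) q / hermiteFun k q)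
        = hermiteFun (k + 1) q / hermiteFun k q ^ (((k : ℝ) + 1) / (k : ℝ))) :
    ∀ t : ℝ, 0 ≤ t → 1 - p * (p - 1) / 2 * t ^ 2 ≤ F t := by
  intro t₀ ht₀
  have hk0 : (k:ℝ) ≠ 0 := by positivity
  have hc : p * (p - 1) / 2 = ((k:ℝ)+1)/(2*(k:ℝ)^2) := by
    subst hp
    rw [div_eq_div_iff (by norm_num) (by positivity)]
    field_simp
    ring
  rcases eq_or_lt_of_le ht₀ with h | h
  · rw [← h, hF0]
    norm_num
  · obtain ⟨q, hq, hqt⟩ := t_surj k hk R hR t₀ h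
    have hψ := psi_nonneg k hk R hR q hq
    have hFq := hF q hq
    rw [hqt] at hFq hψ
    rw [hFq, hc]
    linarith
end
end
end

section
/- For every real x > 0 and every real y ≥ 0 one has x^{3/2} − (1/√2)·(2x − √(x² + y²))·√(x + √(x² + y²)) ≤ (3/8)·x^{−1/2}·y². -/
open Real

theorem pointwise_improvement (x y : ℝ) (hx : 0 < x) (hy : 0 ≤ y) :
    x ^ ((3 : ℝ) / 2)
      - (1 / Real.sqrt 2) * (2 * x - Real.sqrt (x ^ 2 + y ^ 2))
        * Real.sqrt (x + Real.sqrt (x ^ 2 + y ^ 2))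
      ≤ 3 / 8 * x ^ (-(1 : ℝ) / 2) * y ^ 2 := by
  set r := Real.sqrt (x ^ 2 + y ^ 2) with hrdef
  set s := Real.sqrt (x + r) with hsdef
  set a := Real.sqrt 2 with hadef
  set w := Real.sqrt x with hwdef
  have hw2 : w ^ 2 = x := Real.sq_sqrt hx.le
  have hwpos : 0 < w := Real.sqrt_pos.mpr hx
  have hr2 : r ^ 2 = x ^ 2 + y ^ 2 := Real.sq_sqrt (by positivity)
  have hrnn : 0 ≤ r := Real.sqrt_nonneg _
  have hrge : x ≤ r := by nlinarith [sq_nonneg y]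
  have hs2 : s ^ 2 = x + r := Real.sq_sqrt (by linarith)
  have hsnn : 0 ≤ s := Real.sqrt_nonneg _
  have ha2 : a ^ 2 = 2 := Real.sq_sqrt (by norm_num)
  have hapos : 0 < a := Real.sqrt_pos.mpr (by norm_num)
  have h32 : x ^ ((3 : ℝ) / 2) = x * w := by
    rw [show (3:ℝ)/2 = 1 + 1/2 by norm_num, Real.rpow_add hx, Real.rpow_one,
      ← Real.sqrt_eq_rpow]
  have hneg : x ^ (-(1 : ℝ) / 2) = w⁻¹ := by
    rw [show -(1:ℝ)/2 = -(1/2) by norm_num, Real.rpow_neg hx.le, ← Real.sqrt_eq_rpow]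
  have ha' : 1 / a = a / 2 := by
    rw [eq_div_iff (by norm_num : (2:ℝ) ≠ 0)]
    field_simp
    linear_combination -ha2
  have hw' : w⁻¹ = w / x := by
    rw [eq_div_iff hx.ne']
    field_simp
    linear_combination -hw2
  rw [h32, hneg, ha', hw']
  have haws : 0 ≤ 2 * a * w * s := by positivity
  have hfact : 0 ≤ 3 * s ^ 2 + 2 * a * w * s - 4 * w ^ 2 := by linarith
  have key : 8 * x ^ 2 * w - 4 * a * x * (2 * x - r) * s ≤ 3 * w * y ^ 2 := by
    have hid : 3 * w * y ^ 2 - (8 * x ^ 2 * w - 4 * a * x * (2 * x - r) * s)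
        = w * (s - a * w) ^ 2 * (3 * s ^ 2 + 2 * a * w * s - 4 * w ^ 2) := by
      linear_combination (8*w^3 - 12*s*a*w^2 + 6*s^2*w + 4*s^3*a + 8*x*w - 12*x*s*a) * hw2
        + (-3*w) * hr2 + (-3*s^2*w - 3*r*w + 3*x*w + 4*x*s*a) * hs2
        + (4*w^5 - 2*s*a*w^4 + s^2*w^3) * ha2
    nlinarith [mul_nonneg (mul_nonneg hwpos.le (sq_nonneg (s - a * w))) hfact]
  rw [← sub_nonneg]
  have hdiff : 3 / 8 * (w / x) * y ^ 2 - (x * w - a / 2 * (2 * x - r) * s)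
      = (3 * w * y ^ 2 - (8 * x ^ 2 * w - 4 * a * x * (2 * x - r) * s)) / (8 * x) := by
    field_simp
    ring
  rw [hdiff]
  exact div_nonneg (by linarith) (by positivity)
end

section
/- (Turán's inequality for Hermite polynomials.) For every integer n ≥ 1 and every real x, one has Hₙ(x)² − H_{n−1}(x)·H_{n+1}(x) > 0. -/
open Real

noncomputable section

lemma derivative_hermite_succ (n : ℕ) :
    Polynomial.derivative (Polynomial.hermite (n + 1)) =
      Polynomial.C (n + 1 : ℤ) * Polynomial.hermite n := by
  induction n with
  | zero => simp [Polynomial.hermite_one, Polynomial.hermite_zero]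
  | succ n ih =>
    rw [Polynomial.hermite_succ (n + 1), Polynomial.derivative_sub, Polynomial.derivative_mul,
      Polynomial.derivative_X, ih, Polynomial.derivative_mul, Polynomial.derivative_C,
      Polynomial.hermite_succ n]
    simp only [Nat.cast_add, Nat.cast_one, map_add, map_one]
    ring

lemma hermite_rec (n : ℕ) :
    Polynomial.hermite (n + 2) = Polynomial.X * Polynomial.hermite (n + 1)
      - Polynomial.C (n + 1 : ℤ) * Polynomial.hermite n := by
  rw [Polynomial.hermite_succ (n + 1), derivative_hermite_succ]

lemma hermiteFun_rec (n : ℕ) (x : ℝ) :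
    hermiteFun (n + 2) x = x * hermiteFun (n + 1) x - (n + 1 : ℝ) * hermiteFun n x := by
  simp only [hermiteFun, hermite_rec n, map_sub, map_mul, Polynomial.aeval_X,
    Polynomial.aeval_C]
  push_cast
  ring

theorem turan_hermite (n : ℕ) (hn : 1 ≤ n) (x : ℝ) :
    0 < hermiteFun n x ^ 2 - hermiteFun (n - 1) x * hermiteFun (n + 1) x := by
  induction n with
  | zero => omega
  | succ n ih =>
    rcases Nat.eq_zero_or_pos n with h0 | hpos
    · subst h0
      have h2 : hermiteFun 2 x = x * hermiteFun 1 x - 1 * hermiteFun 0 x := by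
        simpa using hermiteFun_rec 0 x
      have h1 : hermiteFun 1 x = x := by
        simp [hermiteFun, Polynomial.hermite_one]
      have h0' : hermiteFun 0 x = 1 := by
        simp [hermiteFun, Polynomial.hermite_zero]
      simp only [Nat.sub_self, h2, h1, h0']
      ring_nf
      norm_num
    · have ih' := ih hpos
      obtain ⟨m, rfl⟩ : ∃ m, n = m + 1 := ⟨n - 1, by omega⟩
      have hrec := hermiteFun_rec m x
      have key : hermiteFun (m + 2) x ^ 2 - hermiteFun (m + 1) x * hermiteFun (m + 3) x
          = (m + 1 : ℝ) * (hermiteFun (m + 1) x ^ 2 - hermiteFun m x * hermiteFun (m + 2) x)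
            + hermiteFun (m + 1) x ^ 2 := by
        have hrec2 := hermiteFun_rec (m + 1) x
        push_cast at hrec2
        rw [show m + 1 + 2 = m + 3 from rfl, show m + 1 + 1 = m + 2 from rfl] at hrec2
        rw [hrec2, hrec]; ring
      simp only [Nat.add_sub_cancel] at ih' ⊢
      rw [show m + 1 + 1 = m + 2 from rfl, show m + 2 + 1 = m + 3 from rfl, key]
      have hm : (0:ℝ) < m + 1 := by positivity
      nlinarith [sq_nonneg (hermiteFun (m + 1) x)]
end
end

section
/- (Turán's inequality for the Hermite function of index −1.) For every real x, one has G(x)² + x·G(x) − 1 > 0. -/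
open Real

noncomputable section

/-- The Hermite function of index −1 : `G x = e^{x²/2} ∫_x^∞ e^{−t²/2} dt`. -/
def Gfun (x : ℝ) : ℝ := exp (x ^ 2 / 2) * ∫ t in Set.Ioi x, exp (-t ^ 2 / 2)

open Real MeasureTheory Set Filter Topology

lemma hf_int : Integrable (fun t : ℝ => exp (-t ^ 2 / 2)) := by
  have := integrable_exp_neg_mul_sq (show (0:ℝ) < 1/2 by norm_num)
  convert this using 2 with t
  ring_nf

lemma hf_cont : Continuous (fun t : ℝ => exp (-t ^ 2 / 2)) := by
  continuity

def Ifun (x : ℝ) : ℝ := ∫ t in Set.Ioi x, exp (-t ^ 2 / 2)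

lemma I_pos (x : ℝ) : 0 < Ifun x := by
  rw [Ifun, setIntegral_pos_iff_support_of_nonneg_ae]
  · have : (Function.support fun t : ℝ => exp (-t ^ 2 / 2)) = Set.univ := by
      ext t; simp [Function.support, (exp_pos _).ne']
    rw [this]
    simp
  · filter_upwards with t using (exp_pos _).le
  · exact hf_int.integrableOn

lemma I_eq (x : ℝ) : Ifun x = Ifun 0 - ∫ t in (0:ℝ)..x, exp (-t ^ 2 / 2) := by
  have h1 := intervalIntegral.integral_Iic_add_Ioi (μ := volume) (b := x) hf_int.integrableOn hf_int.integrableOn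
  have h2 := intervalIntegral.integral_Iic_add_Ioi (μ := volume) (b := (0:ℝ)) hf_int.integrableOn hf_int.integrableOn
  have h3 := intervalIntegral.integral_Iic_sub_Iic (μ := volume) (a := (0:ℝ)) (b := x) hf_int.integrableOn hf_int.integrableOn
  simp only [Ifun]
  linarith

lemma I_hasDeriv (x : ℝ) : HasDerivAt Ifun (-exp (-x ^ 2 / 2)) x := by
  have heq : Ifun = fun y => Ifun 0 - ∫ t in (0:ℝ)..y, exp (-t ^ 2 / 2) :=
    funext fun y => I_eq y
  rw [heq]
  have hd : HasDerivAt (fun y => ∫ t in (0:ℝ)..y, exp (-t ^ 2 / 2)) (exp (-x ^ 2 / 2)) x :=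
    intervalIntegral.integral_hasDerivAt_right hf_int.intervalIntegrable
      hf_cont.aestronglyMeasurable.stronglyMeasurableAtFilter (hf_cont.continuousAt)
  simpa using (hd.const_sub (Ifun 0))

def ufun (x : ℝ) : ℝ := (Real.sqrt (x ^ 2 + 4) - x) / 2

lemma s_pos (x : ℝ) : 0 < Real.sqrt (x ^ 2 + 4) := Real.sqrt_pos.2 (by positivity)

lemma s_sq (x : ℝ) : Real.sqrt (x ^ 2 + 4) ^ 2 = x ^ 2 + 4 :=
  Real.sq_sqrt (by positivity)

lemma s_gt (x : ℝ) : x < Real.sqrt (x ^ 2 + 4) := by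
  nlinarith [s_pos x, s_sq x, sq_nonneg (Real.sqrt (x ^ 2 + 4) - x)]

lemma s_gt' (x : ℝ) : -x < Real.sqrt (x ^ 2 + 4) := by
  nlinarith [s_pos x, s_sq x, sq_nonneg (Real.sqrt (x ^ 2 + 4) + x)]

lemma u_pos (x : ℝ) : 0 < ufun x := by
  have := s_gt x; rw [ufun]; linarith

lemma u_le_one {x : ℝ} (hx : 0 ≤ x) : ufun x ≤ 1 := by
  rw [ufun]
  have h : Real.sqrt (x ^ 2 + 4) ≤ x + 2 := by
    rw [show x ^ 2 + 4 = x^2 + 4 from rfl]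
    nlinarith [s_sq x, s_pos x, Real.sqrt_nonneg (x^2+4)]
  linarith

lemma u_hasDeriv (x : ℝ) :
    HasDerivAt ufun ((x / Real.sqrt (x ^ 2 + 4) - 1) / 2) x := by
  have h1 : HasDerivAt (fun y : ℝ => y ^ 2 + 4) (2 * x) x := by
    simpa using ((hasDerivAt_pow 2 x).add_const 4)
  have h2 : HasDerivAt (fun y : ℝ => Real.sqrt (y ^ 2 + 4)) (2 * x / (2 * Real.sqrt (x ^ 2 + 4))) x :=
    (Real.hasDerivAt_sqrt (by positivity)).comp x h1 |>.congr_deriv (by ring)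
  have h3 := (h2.sub (hasDerivAt_id x)).div_const 2
  convert (show HasDerivAt ufun _ x from h3) using 1
  have := (s_pos x).ne'
  ring

def phi (x : ℝ) : ℝ := Ifun x - ufun x * exp (-x ^ 2 / 2)

lemma e_hasDeriv (x : ℝ) : HasDerivAt (fun y : ℝ => exp (-y ^ 2 / 2)) (-x * exp (-x ^ 2 / 2)) x := by
  have h1 : HasDerivAt (fun y : ℝ => -y ^ 2 / 2) (-x) x := by
    have := ((hasDerivAt_pow 2 x).neg).div_const 2
    simpa using this.congr_deriv (by ring)
  simpa [mul_comm] using h1.exp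

lemma phi_hasDeriv (x : ℝ) :
    HasDerivAt phi
      (-exp (-x ^ 2 / 2) - ((x / Real.sqrt (x ^ 2 + 4) - 1) / 2 * exp (-x ^ 2 / 2)
        + ufun x * (-x * exp (-x ^ 2 / 2)))) x :=
  (I_hasDeriv x).sub ((u_hasDeriv x).mul (e_hasDeriv x))

lemma key_ineq (x : ℝ) : x * (x ^ 2 + 3) < Real.sqrt (x ^ 2 + 4) * (x ^ 2 + 1) := by
  set s := Real.sqrt (x ^ 2 + 4) with hs
  have hsp := s_pos x
  have hsq := s_sq x
  have h4 : (s * (x ^ 2 + 1)) ^ 2 - (x * (x ^ 2 + 3)) ^ 2 = 4 := by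
    linear_combination (x ^ 2 + 1) ^ 2 * hsq
  nlinarith [mul_pos hsp (show (0:ℝ) < x ^ 2 + 1 by positivity), sq_nonneg (s * (x^2+1) + x * (x^2+3))]

lemma phi_deriv_neg (x : ℝ) :
    -exp (-x ^ 2 / 2) - ((x / Real.sqrt (x ^ 2 + 4) - 1) / 2 * exp (-x ^ 2 / 2)
        + ufun x * (-x * exp (-x ^ 2 / 2))) < 0 := by
  set s := Real.sqrt (x ^ 2 + 4) with hs
  have hsp := s_pos x
  have hsq := s_sq x
  have hkey := key_ineq x
  have he : 0 < exp (-x ^ 2 / 2) := exp_pos _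
  rw [ufun]
  have hb : -1 - (x / s - 1) / 2 + x * ((s - x) / 2) < 0 := by
    have : -1 - (x / s - 1) / 2 + x * ((s - x) / 2) = (x * (x^2+3) - s * (x^2+1)) / (2 * s) := by
      rw [← hs] at hsp hsq
      field_simp
      linear_combination x * hsq
    rw [this]
    apply div_neg_of_neg_of_pos (by linarith) (by linarith)
  nlinarith [mul_pos he (neg_pos.2 hb)]

lemma tendsto_e : Tendsto (fun x : ℝ => exp (-x ^ 2 / 2)) atTop (𝓝 0) := by
  apply Real.tendsto_exp_atBot.comp
  have h1 : Tendsto (fun x : ℝ => x ^ 2) atTop atTop := tendsto_pow_atTop (by norm_num)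
  have h2 : Tendsto (fun x : ℝ => -x ^ 2) atTop atBot := tendsto_neg_atTop_atBot.comp h1
  exact h2.atBot_div_const (by norm_num)

lemma I_le {x : ℝ} (hx : 1 ≤ x) : Ifun x ≤ exp (-x ^ 2 / 2) := by
  have hg : ∀ t : ℝ, HasDerivAt (fun y : ℝ => -exp (-y ^ 2 / 2)) (t * exp (-t ^ 2 / 2)) t := by
    intro t
    exact (e_hasDeriv t).neg.congr_deriv (by ring)
  have hlim : Tendsto (fun y : ℝ => -exp (-y ^ 2 / 2)) atTop (𝓝 0) := by
    simpa using tendsto_e.neg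
  have hcont : ContinuousWithinAt (fun y : ℝ => -exp (-y ^ 2 / 2)) (Set.Ici x) x :=
    ((hf_cont.neg).continuousAt).continuousWithinAt
  have hpos : ∀ t ∈ Set.Ioi x, 0 ≤ t * exp (-t ^ 2 / 2) := by
    intro t ht
    have : (0:ℝ) < t := lt_of_lt_of_le (by linarith) (le_of_lt ht)
    positivity
  have hint := integral_Ioi_of_hasDerivAt_of_nonneg hcont (fun t _ => hg t) hpos hlim
  have hintegrable := integrableOn_Ioi_deriv_of_nonneg hcont (fun t _ => hg t) hpos hlim
  have hmono : Ifun x ≤ ∫ t in Set.Ioi x, t * exp (-t ^ 2 / 2) := by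
    apply setIntegral_mono_on hf_int.integrableOn hintegrable measurableSet_Ioi
    intro t ht
    have ht1 : (1:ℝ) ≤ t := le_trans hx (le_of_lt ht)
    nlinarith [exp_pos (-t ^ 2 / 2)]
  calc Ifun x ≤ _ := hmono
    _ = exp (-x ^ 2 / 2) := by rw [hint]; ring

lemma phi_anti : StrictAnti phi :=
  strictAnti_of_deriv_neg fun x => by
    rw [(phi_hasDeriv x).deriv]; exact phi_deriv_neg x

lemma phi_tendsto : Tendsto phi atTop (𝓝 0) := by
  have hneg : Tendsto (fun x : ℝ => -exp (-x ^ 2 / 2)) atTop (𝓝 0) := by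
    simpa using tendsto_e.neg
  apply tendsto_of_tendsto_of_tendsto_of_le_of_le' hneg tendsto_e
  · filter_upwards [eventually_ge_atTop (1:ℝ)] with y hy
    have h1 := I_pos y
    have h2 := u_le_one (le_trans zero_le_one hy)
    have h3 := (u_pos y).le
    have he := exp_pos (-y ^ 2 / 2)
    rw [phi]
    nlinarith
  · filter_upwards [eventually_ge_atTop (1:ℝ)] with y hy
    have h2 := I_le hy
    have h3 := (u_pos y).le
    have he := (exp_pos (-y ^ 2 / 2)).le
    rw [phi]
    nlinarith

lemma phi_pos (x : ℝ) : 0 < phi x := by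
  have h0 : 0 ≤ phi (x + 1) := by
    apply le_of_tendsto phi_tendsto
    filter_upwards [eventually_ge_atTop (x + 1)] with z hz
    exact phi_anti.antitone hz
  exact lt_of_le_of_lt h0 (phi_anti (by linarith))

theorem turan_hermite_neg_one (x : ℝ) : 0 < Gfun x ^ 2 + x * Gfun x - 1 := by
  have hphi := phi_pos x
  rw [phi] at hphi
  have hG : ufun x < Gfun x := by
    have he : exp (x ^ 2 / 2) * exp (-x ^ 2 / 2) = 1 := by
      rw [← Real.exp_add]; ring_nf; exact Real.exp_zero
    have hE := exp_pos (x ^ 2 / 2)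
    have h1 : ufun x * exp (-x ^ 2 / 2) < Ifun x := by linarith
    have h2 := mul_lt_mul_of_pos_left h1 hE
    calc ufun x = exp (x ^ 2 / 2) * (ufun x * exp (-x ^ 2 / 2)) := by
          rw [show exp (x ^ 2 / 2) * (ufun x * exp (-x ^ 2 / 2))
              = ufun x * (exp (x ^ 2 / 2) * exp (-x ^ 2 / 2)) by ring, he, mul_one]
      _ < exp (x ^ 2 / 2) * Ifun x := h2
      _ = Gfun x := rfl
  set s := Real.sqrt (x ^ 2 + 4) with hs
  have hsq := s_sq x
  have hsx' := s_gt' x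
  have hu : ufun x = (s - x) / 2 := rfl
  rw [hu] at hG
  have hfac : Gfun x ^ 2 + x * Gfun x - 1
      = (Gfun x - (s - x) / 2) * (Gfun x + (s + x) / 2) := by
    have : s ^ 2 = x ^ 2 + 4 := hsq
    nlinarith [this]
  rw [hfac]
  have hGpos : 0 < Gfun x := lt_trans (u_pos x) (by rw [hu] at *; exact hG)
  apply mul_pos (by linarith) (by linarith)
end
end

section
/- The function s ↦ G(s) − 1/s is Lebesgue integrable on the interval [1, ∞); in particular the constant α = ∫_1^∞ (G(s) − 1/s) ds is a well-defined real number. -/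
open MeasureTheory Real Set Filter

set_option maxHeartbeats 1000000
noncomputable section

lemma gauss_eq : (fun t : ℝ => exp (-t ^ 2 / 2)) = fun t => exp (-(1/2) * t ^ 2) := by
  ext t; ring_nf

lemma gauss_int (x : ℝ) : IntegrableOn (fun t : ℝ => exp (-t ^ 2 / 2)) (Set.Ioi x) := by
  rw [gauss_eq]
  exact (integrable_exp_neg_mul_sq (by norm_num)).integrableOn

lemma gauss_tendsto : Tendsto (fun t : ℝ => exp (-t ^ 2 / 2)) atTop (nhds 0) := by
  apply Real.tendsto_exp_atBot.comp
  apply Tendsto.atBot_div_const (by norm_num)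
  exact tendsto_neg_atBot_iff.mpr (tendsto_pow_atTop (by norm_num))

lemma deriv1 (t : ℝ) : HasDerivAt (fun t : ℝ => -exp (-t ^ 2 / 2)) (t * exp (-t ^ 2 / 2)) t := by
  have h := (((hasDerivAt_pow 2 t).fun_neg.div_const 2).exp).fun_neg
  exact h.congr_deriv (by push_cast; ring)

lemma t_gauss_integral {x : ℝ} (hx : (0:ℝ) < x) :
    IntegrableOn (fun t : ℝ => t * exp (-t ^ 2 / 2)) (Set.Ioi x) ∧
    ∫ t in Set.Ioi x, t * exp (-t ^ 2 / 2) = exp (-x ^ 2 / 2) := by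
  have hd : ∀ t ∈ Set.Ici x, HasDerivAt (fun t : ℝ => -exp (-t ^ 2 / 2))
      (t * exp (-t ^ 2 / 2)) t := fun t _ => deriv1 t
  have hpos : ∀ t ∈ Set.Ioi x, 0 ≤ t * exp (-t ^ 2 / 2) := fun t ht =>
    mul_nonneg (le_of_lt (hx.trans ht)) (exp_nonneg _)
  have htend : Tendsto (fun t : ℝ => -exp (-t ^ 2 / 2)) atTop (nhds 0) := by
    simpa using gauss_tendsto.neg
  refine ⟨integrableOn_Ioi_deriv_of_nonneg' hd hpos htend, ?_⟩
  rw [integral_Ioi_of_hasDerivAt_of_nonneg' hd hpos htend]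
  ring

lemma gauss_upper {x : ℝ} (hx : (0:ℝ) < x) :
    ∫ t in Set.Ioi x, exp (-t ^ 2 / 2) ≤ exp (-x ^ 2 / 2) / x := by
  obtain ⟨hint, hval⟩ := t_gauss_integral hx
  have h1 : ∫ t in Set.Ioi x, exp (-t ^ 2 / 2) ≤
      ∫ t in Set.Ioi x, (1 / x) * (t * exp (-t ^ 2 / 2)) := by
    apply setIntegral_mono_on (gauss_int x) (hint.const_mul _) measurableSet_Ioi
    intro t ht
    rw [Set.mem_Ioi] at ht
    have : 1 ≤ t / x := (one_le_div hx).mpr ht.le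
    calc exp (-t ^ 2 / 2) = 1 * exp (-t ^ 2 / 2) := by ring
      _ ≤ (t / x) * exp (-t ^ 2 / 2) := by
          apply mul_le_mul_of_nonneg_right this (exp_nonneg _)
      _ = (1 / x) * (t * exp (-t ^ 2 / 2)) := by ring
  rw [integral_const_mul, hval] at h1
  rw [one_div, ← div_eq_inv_mul] at h1
  exact h1

lemma derivF {t : ℝ} (ht : (0:ℝ) < t) :
    HasDerivAt (fun t : ℝ => -((1 / t - 1 / t ^ 3) * exp (-t ^ 2 / 2)))
      ((1 - 3 / t ^ 4) * exp (-t ^ 2 / 2)) t := by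
  have h1 : HasDerivAt (fun t : ℝ => 1 / t - 1 / t ^ 3)
      (-(1 / t ^ 2) + 3 / t ^ 4) t := by
    have ha : HasDerivAt (fun t : ℝ => 1 / t) (-(1 / t ^ 2)) t := by
      simpa [one_div] using (hasDerivAt_inv ht.ne')
    have hb : HasDerivAt (fun t : ℝ => 1 / t ^ 3) (-(3 / t ^ 4)) t := by
      have := ((hasDerivAt_pow 3 t).inv (pow_ne_zero 3 ht.ne'))
      simp only [one_div]
      exact this.congr_deriv (by field_simp; ring)
    simpa using ha.fun_sub hb
  have h2 : HasDerivAt (fun t : ℝ => exp (-t ^ 2 / 2)) (-t * exp (-t ^ 2 / 2)) t := by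
    have h := ((hasDerivAt_pow 2 t).fun_neg.div_const 2).exp
    convert h using 1
    push_cast
    ring
  have := (h1.fun_mul h2).fun_neg
  exact this.congr_deriv (by field_simp; ring)

lemma gauss_lower {x : ℝ} (hx : (1:ℝ) ≤ x) :
    (1 / x - 1 / x ^ 3) * exp (-x ^ 2 / 2) ≤ ∫ t in Set.Ioi x, exp (-t ^ 2 / 2) := by
  have hx0 : (0:ℝ) < x := lt_of_lt_of_le one_pos hx
  have hd : ∀ t ∈ Set.Ici x, HasDerivAt (fun t : ℝ => -((1 / t - 1 / t ^ 3) * exp (-t ^ 2 / 2)))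
      ((1 - 3 / t ^ 4) * exp (-t ^ 2 / 2)) t := fun t ht =>
    derivF (lt_of_lt_of_le hx0 ht)
  have hint : IntegrableOn (fun t : ℝ => (1 - 3 / t ^ 4) * exp (-t ^ 2 / 2)) (Set.Ioi x) := by
    apply Integrable.mono' ((gauss_int x).const_mul 3)
    · apply AEStronglyMeasurable.mul _ (gauss_int x).aestronglyMeasurable
      exact ((measurable_const.sub ((measurable_const.div (measurable_id.pow_const 4)))).aestronglyMeasurable)
    · rw [ae_restrict_iff' measurableSet_Ioi]
      filter_upwards with t ht
      rw [Set.mem_Ioi] at ht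
      have ht1 : (1:ℝ) ≤ t := hx.trans ht.le
      have ht4 : (1:ℝ) ≤ t ^ 4 := one_le_pow₀ ht1
      rw [norm_mul, norm_of_nonneg (exp_nonneg _)]
      have h34 : 3 / t ^ 4 ≤ 3 := by
        rw [div_le_iff₀ (by linarith)]
        nlinarith
      have h340 : 0 ≤ 3 / t ^ 4 := by positivity
      have : ‖1 - 3 / t ^ 4‖ ≤ 3 := by
        rw [Real.norm_eq_abs, abs_le]
        constructor <;> linarith
      calc ‖1 - 3 / t ^ 4‖ * exp (-t ^ 2 / 2) ≤ 3 * exp (-t ^ 2 / 2) :=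
            mul_le_mul_of_nonneg_right this (exp_nonneg _)
        _ = 3 * exp (-t ^ 2 / 2) := rfl
  have htend : Tendsto (fun t : ℝ => -((1 / t - 1 / t ^ 3) * exp (-t ^ 2 / 2))) atTop (nhds 0) := by
    have a1 : Tendsto (fun t : ℝ => 1 / t) atTop (nhds 0) := by
      simpa [one_div] using tendsto_inv_atTop_zero
    have a3 : Tendsto (fun t : ℝ => 1 / t ^ 3) atTop (nhds 0) := by
      simpa [one_div, Pi.inv_def] using (tendsto_pow_atTop (by norm_num : (3:ℕ) ≠ 0)).inv_tendsto_atTop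
    simpa using ((a1.sub a3).mul gauss_tendsto).neg
  have heq : ∫ t in Set.Ioi x, (1 - 3 / t ^ 4) * exp (-t ^ 2 / 2)
      = (1 / x - 1 / x ^ 3) * exp (-x ^ 2 / 2) := by
    rw [integral_Ioi_of_hasDerivAt_of_tendsto' hd hint htend]
    ring
  rw [← heq]
  apply setIntegral_mono_on hint (gauss_int x) measurableSet_Ioi
  intro t ht
  rw [Set.mem_Ioi] at ht
  have : 0 ≤ 3 / t ^ 4 := by positivity
  nlinarith [exp_nonneg (-t ^ 2 / 2), exp_pos (-t ^ 2 / 2)]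

lemma gauss_anti : Antitone (fun x : ℝ => ∫ t in Set.Ioi x, exp (-t ^ 2 / 2)) := by
  intro a b hab
  apply setIntegral_mono_set (gauss_int a)
  · filter_upwards with t using exp_nonneg _
  · exact Filter.Eventually.of_forall (Set.Ioi_subset_Ioi hab)

theorem G_sub_inv_integrable :
    IntegrableOn (fun s : ℝ => Gfun s - 1 / s) (Set.Ici 1) volume := by
  have hmeas : AEStronglyMeasurable (fun s : ℝ => Gfun s - 1 / s)
      (volume.restrict (Set.Ici 1)) := by
    apply AEStronglyMeasurable.sub
    · exact ((continuous_exp.comp (by continuity)).measurable.mul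
        gauss_anti.measurable).aestronglyMeasurable.restrict
    · exact (measurable_const.div measurable_id).aestronglyMeasurable.restrict
  have hbound : IntegrableOn (fun s : ℝ => s ^ (-3 : ℝ)) (Set.Ici 1) := by
    rw [integrableOn_Ici_iff_integrableOn_Ioi]
    exact (integrableOn_Ioi_rpow_iff one_pos).mpr (by norm_num)
  apply Integrable.mono' hbound hmeas
  rw [ae_restrict_iff' measurableSet_Ici]
  filter_upwards with s hs
  rw [Set.mem_Ici] at hs
  have hs0 : (0:ℝ) < s := lt_of_lt_of_le one_pos hs
  have hee : exp (s ^ 2 / 2) * exp (-s ^ 2 / 2) = 1 := by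
    rw [← exp_add]; ring_nf; exact exp_zero
  have hupper : Gfun s ≤ 1 / s := by
    have h2 : Gfun s ≤ exp (s ^ 2 / 2) * (exp (-s ^ 2 / 2) / s) :=
      mul_le_mul_of_nonneg_left (gauss_upper hs0) (exp_nonneg _)
    calc Gfun s ≤ exp (s ^ 2 / 2) * (exp (-s ^ 2 / 2) / s) := h2
      _ = (exp (s ^ 2 / 2) * exp (-s ^ 2 / 2)) / s := by ring
      _ = 1 / s := by rw [hee]
  have hlower : 1 / s - 1 / s ^ 3 ≤ Gfun s := by
    have h2 : exp (s ^ 2 / 2) * ((1 / s - 1 / s ^ 3) * exp (-s ^ 2 / 2)) ≤ Gfun s :=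
      mul_le_mul_of_nonneg_left (gauss_lower hs) (exp_nonneg _)
    calc 1 / s - 1 / s ^ 3
        = (1 / s - 1 / s ^ 3) * (exp (s ^ 2 / 2) * exp (-s ^ 2 / 2)) := by rw [hee]; ring
      _ = exp (s ^ 2 / 2) * ((1 / s - 1 / s ^ 3) * exp (-s ^ 2 / 2)) := by ring
      _ ≤ Gfun s := h2
  have hrw : s ^ (-3 : ℝ) = 1 / s ^ 3 := by
    rw [rpow_neg hs0.le, one_div]
    congr 1
    rw [← rpow_natCast s 3]; norm_num
  rw [hrw, Real.norm_eq_abs, abs_le]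
  constructor <;> linarith
end
end
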